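/- There exist an absolute constant C₀ > 0 and n₀ such that the following holds for all n ≥ n₀: for any integer m with C₀·n ≤ m ≤ exp(n/C₀), setting Δ := C₀·√(log m), for any quasi-orthogonal system x₁, …, x_m ∈ ℝⁿ and any real t ≥ 0.02, one has |B₂ⁿ \ t·Q°| ≤ m^{−10}·|B₂ⁿ|; in particular, since Q_t° = t·Q° ∩ B₂ⁿ, it follows that |Q_t°| ≥ (1 − m^{−10})·|B₂ⁿ|. -/

import Mathlib

open MeasureTheory ProbabilityTheory RealInnerProductSpace Pointwise

/-- The standard Gaussian measure `N(0, I_d)` on `ℝᵈ`. -/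
noncomputable def stdGaussian (d : ℕ) : Measure (EuclideanSpace ℝ (Fin d)) :=
  (Measure.pi fun _ : Fin d => gaussianReal 0 1).map
    (MeasurableEquiv.toLp 2 (Fin d → ℝ))

/-- The Gaussian mean width `w_G(L) = E sup_{x ∈ L} ⟨x, G⟩` of a set `L ⊆ ℝᵈ`. -/
noncomputable def meanWidth {d : ℕ} (L : Set (EuclideanSpace ℝ (Fin d))) : ℝ :=
  ∫ g, sSup ((fun x => ⟪x, g⟫) '' L) ∂(stdGaussian d)

/-- A quasi-orthogonal system with parameter `Δ`: `√n/(2Δ) ≤ ‖x i‖ ≤ 2√n/Δ` for all `i`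
and `|⟨x i, x j⟩| ≤ √n/Δ` for all `i ≠ j`. -/
def QuasiOrth (n : ℕ) (Δ : ℝ) {m : ℕ} (x : Fin m → EuclideanSpace ℝ (Fin n)) : Prop :=
  (∀ i, Real.sqrt n / (2 * Δ) ≤ ‖x i‖ ∧ ‖x i‖ ≤ 2 * Real.sqrt n / Δ) ∧
  ∀ i j, i ≠ j → |⟪x i, x j⟫| ≤ Real.sqrt n / Δ

/-- `Q = conv{±x_i : i ∈ [m]}`. -/
def Qbody {d m : ℕ} (x : Fin m → EuclideanSpace ℝ (Fin d)) :
    Set (EuclideanSpace ℝ (Fin d)) :=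
  convexHull ℝ (Set.range x ∪ Set.range (fun i => -x i))

/-- `Q_t = conv((1/t) Q ∪ B₂ⁿ)`. -/
def Qt {d m : ℕ} (x : Fin m → EuclideanSpace ℝ (Fin d)) (t : ℝ) :
    Set (EuclideanSpace ℝ (Fin d)) :=
  convexHull ℝ ((1 / t) • Qbody x ∪ Metric.closedBall 0 1)

/-- The polar body `L° = {y : ⟨y, z⟩ ≤ 1 for all z ∈ L}`. -/
def polarSet {d : ℕ} (L : Set (EuclideanSpace ℝ (Fin d))) :
    Set (EuclideanSpace ℝ (Fin d)) :=
  {y | ∀ z ∈ L, ⟪y, z⟫ ≤ 1}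

/-!
If `y ∈ B₂ⁿ` is not in `t Q°`, then `⟨y, v⟩ > t` for some `v = ±xᵢ`, so `y` lies in the cap
`{⟨y, v/‖v‖⟩ ≥ σ}` with `σ = 100 √(log m / n) ≤ t/‖v‖`. Such a cap sits inside a ball of radius
`√(1 - σ²)`, of volume `(1 - σ²)^{n/2} |B₂ⁿ| ≤ e^{-σ²n/2} |B₂ⁿ| = m^{-5000} |B₂ⁿ|`, and a union
bound over the `2m` caps gives the first claim. The second follows from `Q_t° = t Q° ∩ B₂ⁿ`.
-/

open Metric Set

section Polar

variable {d : ℕ}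

lemma polarSet_convexHull (S : Set (EuclideanSpace ℝ (Fin d))) :
    polarSet (convexHull ℝ S) = polarSet S := by
  refine Subset.antisymm (fun y hy z hz => hy z (subset_convexHull ℝ S hz)) fun y hy z hz => ?_
  exact convexHull_min (t := {z | ⟪y, z⟫ ≤ 1}) hy
    (convex_halfSpace_le (innerₛₗ ℝ y).isLinear 1) hz

lemma polarSet_union (A B : Set (EuclideanSpace ℝ (Fin d))) :
    polarSet (A ∪ B) = polarSet A ∩ polarSet B :=
  Set.ext fun y => by
    simp only [polarSet, mem_ofPred_eq, mem_union, mem_inter_iff, or_imp, forall_and]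

lemma polarSet_smul (A : Set (EuclideanSpace ℝ (Fin d))) {c : ℝ} (hc : c ≠ 0) :
    polarSet (c • A) = c⁻¹ • polarSet A := by
  ext y
  rw [mem_inv_smul_set_iff₀ hc]
  simp only [polarSet, mem_ofPred_eq, ← image_smul, forall_mem_image, real_inner_smul_left,
    real_inner_smul_right]

lemma polarSet_closedBall_zero_one :
    polarSet (closedBall (0 : EuclideanSpace ℝ (Fin d)) 1) = closedBall 0 1 := by
  ext y
  simp only [polarSet, mem_ofPred_eq, mem_closedBall_zero_iff]
  refine ⟨fun h => ?_, fun hy z hz => ?_⟩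
  · rcases eq_or_ne y 0 with rfl | hy
    · simp
    have := h (‖y‖⁻¹ • y) (norm_smul_inv_norm (𝕜 := ℝ) hy).le
    rwa [real_inner_smul_right, real_inner_self_eq_norm_sq, sq, ← mul_assoc,
      inv_mul_cancel₀ (norm_ne_zero_iff.2 hy), one_mul] at this
  · calc ⟪y, z⟫ ≤ ‖y‖ * ‖z‖ := real_inner_le_norm y z
      _ ≤ 1 := mul_le_one₀ hy (norm_nonneg z) hz

lemma polarSet_Qt {m : ℕ} (x : Fin m → EuclideanSpace ℝ (Fin d)) {t : ℝ} (ht : t ≠ 0) :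
    polarSet (Qt x t) = t • polarSet (Qbody x) ∩ closedBall 0 1 := by
  rw [Qt, polarSet_convexHull, polarSet_union, polarSet_smul _ (one_div_ne_zero ht), one_div,
    inv_inv, polarSet_closedBall_zero_one]

lemma mem_smul_polarSet_range_iff {ι : Type*} (w : ι → EuclideanSpace ℝ (Fin d)) {t : ℝ}
    (ht : 0 < t) {y : EuclideanSpace ℝ (Fin d)} :
    y ∈ t • polarSet (range w) ↔ ∀ j, ⟪y, w j⟫ ≤ t := by
  simp only [mem_smul_set_iff_inv_smul_mem₀ ht.ne', polarSet, mem_ofPred_eq, forall_mem_range,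
    real_inner_smul_left, inv_mul_le_one₀ ht]

end Polar

lemma mem_closedBall_of_le_inner {E : Type*} [NormedAddCommGroup E] [InnerProductSpace ℝ E]
    {y u : E} {σ : ℝ} (hy : ‖y‖ ≤ 1) (hu : ‖u‖ = 1) (hσ : 0 ≤ σ) (hyu : σ ≤ ⟪y, u⟫) :
    y ∈ closedBall (σ • u) √(1 - σ ^ 2) := by
  rw [mem_closedBall, dist_eq_norm]
  refine Real.le_sqrt_of_sq_le ?_
  rw [norm_sub_sq_real, real_inner_smul_right, norm_smul, hu, Real.norm_of_nonneg hσ]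
  nlinarith [norm_nonneg y]

section Caps

variable {d : ℕ} {ι : Type*} (w : ι → EuclideanSpace ℝ (Fin d)) {t σ : ℝ}

lemma closedBall_diff_smul_polarSet_range_subset (ht : 0 < t) (hσ : 0 ≤ σ)
    (hw : ∀ j, σ * ‖w j‖ ≤ t) :
    closedBall 0 1 \ t • polarSet (range w) ⊆
      ⋃ j, closedBall (σ • ‖w j‖⁻¹ • w j) √(1 - σ ^ 2) := by
  rintro y ⟨hyB, hyQ⟩
  rw [mem_smul_polarSet_range_iff w ht] at hyQ
  push Not at hyQ
  obtain ⟨j, hj⟩ := hyQ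
  have hwj : w j ≠ 0 := fun h => by simp only [h, inner_zero_right] at hj; linarith
  have hwj' : 0 < ‖w j‖ := norm_pos_iff.2 hwj
  refine mem_iUnion.2 ⟨j, mem_closedBall_of_le_inner (mem_closedBall_zero_iff.1 hyB)
    (norm_smul_inv_norm (𝕜 := ℝ) hwj) hσ ?_⟩
  rw [real_inner_smul_right, ← div_eq_inv_mul, le_div_iff₀ hwj']
  linarith [hw j]

lemma volume_closedBall_diff_smul_polarSet_range_le [Fintype ι] (ht : 0 < t) (hσ : 0 ≤ σ)
    (hw : ∀ j, σ * ‖w j‖ ≤ t) :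
    volume (closedBall (0 : EuclideanSpace ℝ (Fin d)) 1 \ t • polarSet (range w)) ≤
      Fintype.card ι * ENNReal.ofReal (√(1 - σ ^ 2) ^ d) *
        volume (closedBall (0 : EuclideanSpace ℝ (Fin d)) 1) :=
  calc _ ≤ volume (⋃ j, closedBall (σ • ‖w j‖⁻¹ • w j) √(1 - σ ^ 2)) :=
        measure_mono (closedBall_diff_smul_polarSet_range_subset w ht hσ hw)
    _ ≤ ∑ j, volume (closedBall (σ • ‖w j‖⁻¹ • w j) √(1 - σ ^ 2)) :=
        measure_iUnion_fintype_le _ _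
    _ = _ := by
        simp only [Measure.addHaar_closedBall' _ _ (Real.sqrt_nonneg _), finrank_euclideanSpace,
          Fintype.card_fin, Finset.sum_const, Finset.card_univ, nsmul_eq_mul, mul_assoc]

lemma volume_closedBall_diff_smul_polarSet_Qbody_le {m : ℕ} (x : Fin m → EuclideanSpace ℝ (Fin d))
    (ht : 0 < t) (hσ : 0 ≤ σ) (hx : ∀ i, σ * ‖x i‖ ≤ t) :
    volume (closedBall (0 : EuclideanSpace ℝ (Fin d)) 1 \ t • polarSet (Qbody x)) ≤
      ENNReal.ofReal (((m : ℝ) + m) * √(1 - σ ^ 2) ^ d) *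
        volume (closedBall (0 : EuclideanSpace ℝ (Fin d)) 1) := by
  set w := Sum.elim x fun i => -x i
  have hQ : polarSet (Qbody x) = polarSet (range w) := by
    rw [Qbody, polarSet_convexHull, Set.Sum.elim_range]
  have hw : ∀ j, σ * ‖w j‖ ≤ t := by simpa [w, Sum.forall] using hx
  rw [hQ, ENNReal.ofReal_mul (by positivity), ENNReal.ofReal_add (by positivity) (by positivity),
    ENNReal.ofReal_natCast]
  simpa [Fintype.card_sum] using volume_closedBall_diff_smul_polarSet_range_le w ht hσ hw

end Caps

lemma sqrt_one_sub_sq_pow_le_exp (σ : ℝ) (n : ℕ) :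
    √(1 - σ ^ 2) ^ n ≤ Real.exp (-(σ ^ 2 * n / 2)) :=
  calc √(1 - σ ^ 2) ^ n ≤ √(Real.exp (-σ ^ 2)) ^ n := by
        gcongr; linarith [Real.add_one_le_exp (-σ ^ 2)]
    _ = _ := by rw [← Real.exp_half, ← Real.exp_nat_mul]; ring_nf

lemma add_self_mul_sqrt_one_sub_sq_pow_le {m n : ℕ} {σ : ℝ} (hm : 2 ≤ m)
    (hσ : 24 * Real.log m ≤ σ ^ 2 * n) :
    ((m : ℝ) + m) * √(1 - σ ^ 2) ^ n ≤ ((m : ℝ) ^ 10)⁻¹ := by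
  have hm2 : (2 : ℝ) ≤ m := by exact_mod_cast hm
  have hm0 : (0 : ℝ) < m := by linarith
  have hexp : Real.exp (-(σ ^ 2 * n / 2)) ≤ ((m : ℝ) ^ 12)⁻¹ := by
    rw [← Real.exp_log hm0, ← Real.exp_nat_mul, ← Real.exp_neg]
    gcongr
    push_cast
    linarith
  calc ((m : ℝ) + m) * √(1 - σ ^ 2) ^ n ≤ (m * m) * ((m : ℝ) ^ 12)⁻¹ :=
        mul_le_mul (by nlinarith) ((sqrt_one_sub_sq_pow_le_exp σ n).trans hexp)
          (by positivity) (by positivity)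
    _ = ((m : ℝ) ^ 10)⁻¹ := by field_simp

lemma one_sub_mul_measure_le_measure_inter {α : Type*} [MeasurableSpace α] {μ : Measure α}
    {s t : Set α} {ε : ENNReal} (hs : μ s ≠ ⊤) (h : μ (s \ t) ≤ ε * μ s) :
    (1 - ε) * μ s ≤ μ (t ∩ s) := by
  rw [ENNReal.sub_mul fun _ _ => hs, one_mul, tsub_le_iff_right, inter_comm]
  exact (measure_le_inter_add_sdiff μ s t).trans (by gcongr)

/-- Volume of the removed cap: `|B₂ⁿ \ t Q°| ≤ m⁻¹⁰ |B₂ⁿ|`, and consequently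
`|Q_t°| ≥ (1 − m⁻¹⁰) |B₂ⁿ|` (here `Q_t° = t Q° ∩ B₂ⁿ`). -/
theorem stmt_8 :
    ∃ C₀ : ℝ, 0 < C₀ ∧ ∃ n₀ : ℕ, ∀ n : ℕ, n₀ ≤ n →
      ∀ m : ℕ, C₀ * (n : ℝ) ≤ (m : ℝ) → (m : ℝ) ≤ Real.exp ((n : ℝ) / C₀) →
      ∀ x : Fin m → EuclideanSpace ℝ (Fin n),
        QuasiOrth n (C₀ * Real.sqrt (Real.log m)) x →
        ∀ t : ℝ, (0.02 : ℝ) ≤ t →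
        volume (Metric.closedBall (0 : EuclideanSpace ℝ (Fin n)) 1 \
            t • polarSet (Qbody x)) ≤
          ((m : ENNReal) ^ 10)⁻¹ *
            volume (Metric.closedBall (0 : EuclideanSpace ℝ (Fin n)) 1) ∧
        (1 - ((m : ENNReal) ^ 10)⁻¹) *
            volume (Metric.closedBall (0 : EuclideanSpace ℝ (Fin n)) 1) ≤
          volume (polarSet (Qt x t)) := by
  refine ⟨10000, by norm_num, 1, fun n hn m hm _ x hx t ht => ?_⟩
  have hn1 : (1 : ℝ) ≤ n := by exact_mod_cast hn
  have hm2 : 2 ≤ m := by exact_mod_cast (by nlinarith : (2 : ℝ) ≤ m)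
  have hlog : 0 < Real.log m := Real.log_pos (by exact_mod_cast hm2)
  have ht0 : 0 < t := by linarith
  set σ := 100 * √(Real.log m) / √n
  have hσx (i : Fin m) : σ * ‖x i‖ ≤ t :=
    calc σ * ‖x i‖ ≤ σ * (2 * √n / (10000 * √(Real.log m))) := by gcongr; exact (hx.1 i).2
      _ = 0.02 := by simp only [σ]; field_simp; norm_num
      _ ≤ t := ht
  have hσn : 24 * Real.log m ≤ σ ^ 2 * n := by
    rw [div_pow, mul_pow, Real.sq_sqrt hlog.le, Real.sq_sqrt (by positivity),
      div_mul_cancel₀ _ (by positivity)]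
    linarith
  have hcap : volume (closedBall (0 : EuclideanSpace ℝ (Fin n)) 1 \ t • polarSet (Qbody x)) ≤
      ((m : ENNReal) ^ 10)⁻¹ * volume (closedBall (0 : EuclideanSpace ℝ (Fin n)) 1) := by
    refine (volume_closedBall_diff_smul_polarSet_Qbody_le x ht0 (by positivity) hσx).trans ?_
    rw [← ENNReal.ofReal_natCast, ← ENNReal.ofReal_pow (Nat.cast_nonneg m),
      ← ENNReal.ofReal_inv_of_pos (by positivity)]
    gcongr
    exact add_self_mul_sqrt_one_sub_sq_pow_le hm2 hσn
  refine ⟨hcap, ?_⟩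
  rw [polarSet_Qt x ht0.ne']
  exact one_sub_mul_measure_le_measure_inter measure_closedBall_lt_top.ne hcap
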